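/- arXiv:2507.01155 — 9 statements merged into one kernel-verified Lean document; each statement's English description precedes it below -/
import Mathlib

section
/- Let (X,f) be a dynamical system with f surjective, let X_∞ = lim←(X,f) be the inverse limit, and let σ : X_∞ → X_∞ be the shift map. Then (X,f) has the specification property if and only if (X_∞,σ) has the specification property. -/
/-- The specification property for a self-map `f`, with respect to a distance
function `d` on the underlying space: for every `ε > 0` there is a positive
integer `N` such that every `N`-spaced specification
`(f^[k i] (x i), …, f^[ℓ i] (x i))`, `i = 0, …, n-1`, is `ε`-traced by some
point `y`. -/
def SpecPropD {A : Type*} (d : A → A → ℝ) (f : A → A) : Prop :=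
  ∀ ε : ℝ, 0 < ε → ∃ N : ℕ, 0 < N ∧
    ∀ (n : ℕ) (x : ℕ → A) (k ℓ : ℕ → ℕ),
      (∀ i, i < n → k i ≤ ℓ i) →
      (∀ i, i + 1 < n → ℓ i + N ≤ k (i + 1)) →
      ∃ y : A, ∀ i, i < n → ∀ j, k i ≤ j → j ≤ ℓ i →
        d (f^[j] y) (f^[j] (x i)) ≤ ε

/-- The initial specification property for a self-map `f`, with respect to a
distance function `d`: for every `ε > 0` there is a positive integer `N` such
that for every `n ≥ 1`, all points `x 0, …, x (n-1)`, all nonnegative integers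
`ℓ 0, …, ℓ (n-1)` and all gaps `m 0, …, m (n-2) ≥ N` there is `y` with
`d (f^[ℓ 0 + m 0 + ⋯ + ℓ (i-1) + m (i-1) + j] y) (f^[j] (x i)) ≤ ε`
for all `i < n` and `j ≤ ℓ i`. -/
def InitSpecPropD {A : Type*} (d : A → A → ℝ) (f : A → A) : Prop :=
  ∀ ε : ℝ, 0 < ε → ∃ N : ℕ, 0 < N ∧
    ∀ (n : ℕ), 1 ≤ n → ∀ (x : ℕ → A) (ℓ m : ℕ → ℕ),
      (∀ i, i + 1 < n → N ≤ m i) →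
      ∃ y : A, ∀ i, i < n → ∀ j, j ≤ ℓ i →
        d (f^[(∑ t ∈ Finset.range i, (ℓ t + m t)) + j] y) (f^[j] (x i)) ≤ ε

/-- The sup-metric `d(x, y) = sup_m 2^{-m} d(x_m, y_m)` on one-sided sequences
(the entry with index `m = 0, 1, 2, ...` plays the role of the paper's
`(m+1)`-st coordinate). -/
noncomputable def supDist {X : Type*} [MetricSpace X] (x y : ℕ → X) : ℝ :=
  ⨆ m : ℕ, (1 / 2 : ℝ) ^ (m + 1) * dist (x m) (y m)

section Aux

variable {X : Type*} (f : X → X)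

/-- Coordinates of a point of the inverse limit: the `t`-th coordinate is the
`s`-th image of the `(t+s)`-th coordinate. -/
lemma invlim_coords (z : {x : ℕ → X // ∀ i, x i = f (x (i + 1))}) :
    ∀ (s t : ℕ), z.1 t = f^[s] (z.1 (t + s)) := by
  intro s
  induction s with
  | zero => intro t; simp
  | succ s ih =>
    intro t
    have h1 : z.1 (t + s) = f (z.1 (t + s + 1)) := z.2 (t + s)
    have h2 := ih t
    rw [h2, h1, ← Function.iterate_succ_apply]
    rfl

variable (hsurj : Function.Surjective f)

/-- Extend a point `q : X` to a point of the inverse limit whose `T`-th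
coordinate is `q` (earlier coordinates are forward images of `q`, later ones
are obtained from a section of `f`). -/
noncomputable def extPt (q : X) (T : ℕ) : {x : ℕ → X // ∀ i, x i = f (x (i + 1))} :=
  ⟨fun t => if t ≤ T then f^[T - t] q else (Function.surjInv hsurj)^[t - T] q, by
    intro i
    rcases lt_trichotomy i T with h | h | h
    · simp only [if_pos h.le, if_pos (by omega : i + 1 ≤ T)]
      have e : T - i = (T - (i + 1)) + 1 := by omega
      rw [e, Function.iterate_succ_apply']
    · subst h
      simp only [if_pos le_rfl, if_neg (by omega : ¬ i + 1 ≤ i)]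
      have e : i + 1 - i = 1 := by omega
      rw [e, Nat.sub_self, Function.iterate_one, Function.iterate_zero_apply,
        Function.surjInv_eq hsurj]
    · simp only [if_neg (by omega : ¬ i ≤ T), if_neg (by omega : ¬ i + 1 ≤ T)]
      have e : i + 1 - T = (i - T) + 1 := by omega
      rw [e, Function.iterate_succ_apply', Function.surjInv_eq hsurj]⟩

lemma extPt_coe (q : X) (T t : ℕ) (h : t ≤ T) :
    (extPt f hsurj q T).1 t = f^[T - t] q := if_pos h

/-- Monotonicity of the endpoints of an `N`-spaced specification. -/
lemma ell_mono {n N : ℕ} (k ℓ : ℕ → ℕ)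
    (hkl : ∀ i, i < n → k i ≤ ℓ i)
    (hgap : ∀ i, i + 1 < n → ℓ i + N ≤ k (i + 1)) :
    ∀ i, i < n → ℓ i ≤ ℓ (n - 1) := by
  have aux : ∀ d i, i + d < n → ℓ i ≤ ℓ (i + d) := by
    intro d
    induction d with
    | zero => intro i _; simp
    | succ d ih =>
      intro i h
      have h1 : ℓ i ≤ ℓ (i + d) := ih i (by omega)
      have h2 : ℓ (i + d) + N ≤ k (i + d + 1) := hgap _ (by omega)
      have h3 : k (i + d + 1) ≤ ℓ (i + d + 1) := hkl _ (by omega)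
      have e : i + (d + 1) = i + d + 1 := by omega
      rw [e]
      omega
  intro i hi
  have h := aux (n - 1 - i) i (by omega)
  have e : i + (n - 1 - i) = n - 1 := by omega
  rwa [e] at h

end Aux

/-- For a compact metric space `X` and a continuous surjection `f : X → X`,
`(X, f)` has the specification property iff the shift map `σ` on the inverse
limit `lim← (X, f)` (with the sup-metric) has the specification property. -/
theorem specification_iff_inverse_limit_specification
    {X : Type*} [MetricSpace X] [CompactSpace X]
    (f : X → X) (hf : Continuous f) (hsurj : Function.Surjective f)
    (σ : {x : ℕ → X // ∀ i, x i = f (x (i + 1))} →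
         {x : ℕ → X // ∀ i, x i = f (x (i + 1))})
    (hσ : ∀ x, (σ x).1 = fun i => x.1 (i + 1)) :
    SpecPropD dist f ↔ SpecPropD (fun x y => supDist x.1 y.1) σ := by
  rcases isEmpty_or_nonempty X with hX | hX
  · -- Empty space: both properties hold vacuously.
    constructor
    · intro _ ε hε
      exact ⟨1, one_pos, fun n x k ℓ _ _ => hX.elim ((x 0).1 0)⟩
    · intro _ ε hε
      exact ⟨1, one_pos, fun n x k ℓ _ _ => hX.elim (x 0)⟩
  -- Nonempty case. Preliminaries.
  set D : ℝ := Metric.diam (Set.univ : Set X) with hDdef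
  have hD : ∀ a b : X, dist a b ≤ D := fun a b =>
    Metric.dist_le_diam_of_mem isCompact_univ.isBounded trivial trivial
  have hD0 : 0 ≤ D := Metric.diam_nonneg
  -- the iterated shift
  have hshift : ∀ (j : ℕ) (z : {x : ℕ → X // ∀ i, x i = f (x (i + 1))}) (m : ℕ),
      (σ^[j] z).1 m = z.1 (m + j) := by
    intro j
    induction j with
    | zero => intro z m; rfl
    | succ j ih =>
      intro z m
      rw [Function.iterate_succ_apply, ih (σ z) m, congrFun (hσ z) (m + j)]
      rfl
  constructor
  · -- `f`-specification implies `σ`-specification.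
    intro hspec ε hε
    obtain ⟨M, hM⟩ : ∃ M : ℕ, (1 / 2 : ℝ) ^ M < ε / (D + 1) :=
      exists_pow_lt_of_lt_one (by positivity) (by norm_num)
    have hMD : (1 / 2 : ℝ) ^ M * (D + 1) < ε := (lt_div_iff₀ (by linarith)).mp hM
    obtain ⟨N, hN0, hN⟩ := hspec ε hε
    refine ⟨N + M, by omega, ?_⟩
    intro n x k ℓ hkl hgap
    have hmono := ell_mono (N := N + M) k ℓ hkl hgap
    set T := ℓ (n - 1) + M with hT
    obtain ⟨y, hy⟩ := hN n (fun i => (x (n - 1 - i)).1 T)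
      (fun i => T - (ℓ (n - 1 - i) + M)) (fun i => T - k (n - 1 - i))
      (by
        intro i hi
        show T - (ℓ (n - 1 - i) + M) ≤ T - k (n - 1 - i)
        have h1 := hkl (n - 1 - i) (by omega)
        have h2 := hmono (n - 1 - i) (by omega)
        omega)
      (by
        intro i hi
        show T - k (n - 1 - i) + N ≤ T - (ℓ (n - 1 - (i + 1)) + M)
        have ha1 : n - 1 - i = (n - 2 - i) + 1 := by omega
        have ha2 : n - 1 - (i + 1) = n - 2 - i := by omega
        rw [ha1, ha2]
        have h1 := hgap (n - 2 - i) (by omega)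
        have h2 := hkl (n - 2 - i + 1) (by omega)
        have h3 := hmono (n - 2 - i + 1) (by omega)
        omega)
    refine ⟨extPt f hsurj y T, ?_⟩
    intro i hi j hkj hjl
    have hji : ℓ i ≤ ℓ (n - 1) := hmono i hi
    simp only [supDist]
    refine ciSup_le ?_
    intro m
    rcases lt_or_ge m M with hm | hm
    · -- small coordinates: use the tracing by `y`.
      have ht : m + j ≤ T := by omega
      rw [hshift j _ m, hshift j _ m, extPt_coe f hsurj y T (m + j) ht]
      have hcoord : (x i).1 (m + j) = f^[T - (m + j)] ((x i).1 T) := by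
        have h := invlim_coords f (x i) (T - (m + j)) (m + j)
        rwa [Nat.add_sub_cancel' ht] at h
      rw [hcoord]
      have hii : n - 1 - (n - 1 - i) = i := by omega
      have htr := hy (n - 1 - i) (by omega) (T - (m + j))
        (by rw [hii]; omega) (by rw [hii]; omega)
      rw [hii] at htr
      calc (1 / 2 : ℝ) ^ (m + 1) * dist (f^[T - (m + j)] y) (f^[T - (m + j)] ((x i).1 T))
          ≤ 1 * dist (f^[T - (m + j)] y) (f^[T - (m + j)] ((x i).1 T)) :=
            mul_le_mul_of_nonneg_right (pow_le_one₀ (by norm_num) (by norm_num)) dist_nonneg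
        _ = dist (f^[T - (m + j)] y) (f^[T - (m + j)] ((x i).1 T)) := one_mul _
        _ ≤ ε := htr
    · -- large coordinates: use the diameter bound.
      calc (1 / 2 : ℝ) ^ (m + 1) * dist ((σ^[j] (extPt f hsurj y T)).1 m) ((σ^[j] (x i)).1 m)
          ≤ (1 / 2 : ℝ) ^ M * (D + 1) := by
            apply mul_le_mul
            · exact pow_le_pow_of_le_one (by norm_num) (by norm_num) (by omega)
            · exact le_trans (hD _ _) (by linarith)
            · exact dist_nonneg
            · positivity
        _ ≤ ε := hMD.le
  · -- `σ`-specification implies `f`-specification.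
    intro hspec ε hε
    obtain ⟨N, hN0, hN⟩ := hspec (ε / 2) (by linarith)
    refine ⟨N, hN0, ?_⟩
    intro n x k ℓ hkl hgap
    have hmono := ell_mono (N := N) k ℓ hkl hgap
    set T := ℓ (n - 1) with hT
    obtain ⟨yh, hyh⟩ := hN n (fun i => extPt f hsurj (x (n - 1 - i)) T)
      (fun i => T - ℓ (n - 1 - i)) (fun i => T - k (n - 1 - i))
      (by
        intro i hi
        show T - ℓ (n - 1 - i) ≤ T - k (n - 1 - i)
        have h1 := hkl (n - 1 - i) (by omega)
        omega)
      (by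
        intro i hi
        show T - k (n - 1 - i) + N ≤ T - ℓ (n - 1 - (i + 1))
        have ha1 : n - 1 - i = (n - 2 - i) + 1 := by omega
        have ha2 : n - 1 - (i + 1) = n - 2 - i := by omega
        rw [ha1, ha2]
        have h1 := hgap (n - 2 - i) (by omega)
        have h2 := hkl (n - 2 - i + 1) (by omega)
        have h3 := hmono (n - 2 - i + 1) (by omega)
        omega)
    refine ⟨yh.1 T, ?_⟩
    intro i hi j hkj hjl
    have hji : ℓ i ≤ ℓ (n - 1) := hmono i hi
    have hjT : j ≤ T := by omega
    have hii : n - 1 - (n - 1 - i) = i := by omega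
    have htr := hyh (n - 1 - i) (by omega) (T - j)
      (by rw [hii]; omega) (by rw [hii]; omega)
    rw [hii] at htr
    -- extract the 0-th coordinate from the sup-metric bound
    have hb : BddAbove (Set.range fun m : ℕ =>
        (1 / 2 : ℝ) ^ (m + 1) * dist ((σ^[T - j] yh).1 m)
          ((σ^[T - j] (extPt f hsurj (x i) T)).1 m)) := by
      refine ⟨D, ?_⟩
      rintro r ⟨m, rfl⟩
      calc (1 / 2 : ℝ) ^ (m + 1) * dist _ _
          ≤ 1 * dist ((σ^[T - j] yh).1 m) ((σ^[T - j] (extPt f hsurj (x i) T)).1 m) :=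
            mul_le_mul_of_nonneg_right (pow_le_one₀ (by norm_num) (by norm_num)) dist_nonneg
        _ = _ := one_mul _
        _ ≤ D := hD _ _
    have h0 := le_ciSup hb 0
    have hsup : supDist (σ^[T - j] yh).1 (σ^[T - j] (extPt f hsurj (x i) T)).1 ≤ ε / 2 := htr
    have h1 : (1 / 2 : ℝ) ^ (0 + 1) * dist ((σ^[T - j] yh).1 0)
        ((σ^[T - j] (extPt f hsurj (x i) T)).1 0) ≤ ε / 2 := le_trans h0 hsup
    rw [hshift (T - j) _ 0, hshift (T - j) _ 0] at h1
    have e0 : 0 + (T - j) = T - j := by omega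
    rw [e0] at h1
    have hext : (extPt f hsurj (x i) T).1 (T - j) = f^[j] (x i) := by
      rw [extPt_coe f hsurj (x i) T (T - j) (by omega)]
      congr 1
      omega
    have hyco : yh.1 (T - j) = f^[j] (yh.1 T) := by
      have h := invlim_coords f yh j (T - j)
      rwa [Nat.sub_add_cancel hjT] at h
    rw [hext, hyco] at h1
    have : dist (f^[j] (yh.1 T)) (f^[j] (x i)) ≤ ε := by
      have hp : (1 / 2 : ℝ) ^ (0 + 1) = (1 / 2 : ℝ) := by norm_num
      rw [hp] at h1
      linarith
    exact this
end

section
/- Let (X,f) be a dynamical system with f surjective, let X_∞ = lim←(X,f) be the inverse limit, and let σ : X_∞ → X_∞ be the shift map. Then (X,f) has the initial specification property if and only if (X_∞,σ) has the initial specification property. -/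
section Helpers

variable {X : Type*} {f : X → X}

/-- A backward orbit through `w` at index `K`: below `K` it is the forward
orbit of `w` (reversed), above `K` it is a chain of preimages. -/
noncomputable def limChain (f : X → X) (hsurj : Function.Surjective f)
    (w : X) (K : ℕ) : ℕ → X :=
  fun k => if k ≤ K then f^[K - k] w else (Function.surjInv hsurj)^[k - K] w

lemma limChain_spec (hsurj : Function.Surjective f) (w : X) (K : ℕ) :
    ∀ i, limChain f hsurj w K i = f (limChain f hsurj w K (i + 1)) := by
  intro i
  unfold limChain
  rcases lt_trichotomy i K with h | h | h
  · rw [if_pos h.le, if_pos (show i + 1 ≤ K by omega)]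
    have : K - i = (K - (i + 1)) + 1 := by omega
    rw [this, Function.iterate_succ_apply']
  · subst h
    rw [if_pos le_rfl, if_neg (by omega)]
    simp [Function.surjInv_eq hsurj]
  · rw [if_neg (by omega), if_neg (by omega)]
    have : i + 1 - K = (i - K) + 1 := by omega
    rw [this, Function.iterate_succ_apply', Function.surjInv_eq hsurj]

lemma limChain_le (hsurj : Function.Surjective f) (w : X) {K k : ℕ} (h : k ≤ K) :
    limChain f hsurj w K k = f^[K - k] w := if_pos h

lemma chain_iterate {x : ℕ → X} (hx : ∀ i, x i = f (x (i + 1))) :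
    ∀ (b a : ℕ), x a = f^[b] (x (a + b)) := by
  intro b
  induction b with
  | zero => simp
  | succ b ih =>
    intro a
    rw [ih a, hx (a + b)]
    exact (Function.iterate_succ_apply f b (x (a + b + 1))).symm

lemma sigma_iterate {S : Type*} (σ : S → S) (val : S → (ℕ → X))
    (hσ : ∀ x, val (σ x) = fun i => val x (i + 1)) :
    ∀ (j : ℕ) (x : S) (i : ℕ), val (σ^[j] x) i = val x (i + j) := by
  intro j
  induction j with
  | zero => simp
  | succ j ih =>
    intro x i
    rw [Function.iterate_succ_apply, ih (σ x) i, hσ x]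
    simp [add_assoc, add_comm 1 j]

lemma key_sum (n : ℕ) (a b : ℕ → ℕ) :
    ∀ d, d < n →
      (∑ u ∈ Finset.range d, (a (n - 1 - u) + b (n - 2 - u)))
        + (∑ t ∈ Finset.range (n - 1 - d), (a t + b t)) + a (n - 1 - d)
      = (∑ t ∈ Finset.range (n - 1), (a t + b t)) + a (n - 1) := by
  intro d
  induction d with
  | zero => intro _; simp
  | succ d ih =>
    intro hd
    have ih' := ih (by omega)
    rw [Finset.sum_range_succ]
    have h1 : n - 1 - d = (n - 1 - (d + 1)) + 1 := by omega
    rw [h1, Finset.sum_range_succ] at ih'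
    have h2 : n - 2 - d = n - 1 - (d + 1) := by omega
    rw [h2]
    rw [show (n - 1 - (d + 1)) + 1 = n - 1 - d by omega] at ih'
    omega

end Helpers

section SupDist

variable {X : Type*} [MetricSpace X]

lemma supDist_le {x y : ℕ → X} {ε : ℝ}
    (h : ∀ m, (1 / 2 : ℝ) ^ (m + 1) * dist (x m) (y m) ≤ ε) :
    supDist x y ≤ ε := ciSup_le h

lemma le_supDist {C : ℝ} (hC : ∀ a b : X, dist a b ≤ C)
    {x y : ℕ → X} (m : ℕ) :
    (1 / 2 : ℝ) ^ (m + 1) * dist (x m) (y m) ≤ supDist x y := by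
  unfold supDist
  refine le_ciSup (f := fun m => (1 / 2 : ℝ) ^ (m + 1) * dist (x m) (y m)) ⟨max C 0, ?_⟩ m
  rintro _ ⟨k, rfl⟩
  calc (1 / 2 : ℝ) ^ (k + 1) * dist (x k) (y k)
      ≤ 1 * dist (x k) (y k) := by
        apply mul_le_mul_of_nonneg_right _ dist_nonneg
        exact pow_le_one₀ (by norm_num) (by norm_num)
    _ = dist (x k) (y k) := one_mul _
    _ ≤ C := hC _ _
    _ ≤ max C 0 := le_max_left _ _

end SupDist

/-- For a compact metric space `X` and a continuous surjection `f : X → X`,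
`(X, f)` has the initial specification property iff the shift map `σ` on the
inverse limit `lim← (X, f)` (with the sup-metric) has the initial
specification property. -/
theorem initial_specification_iff_inverse_limit_initial_specification
    {X : Type*} [MetricSpace X] [CompactSpace X]
    (f : X → X) (hf : Continuous f) (hsurj : Function.Surjective f)
    (σ : {x : ℕ → X // ∀ i, x i = f (x (i + 1))} →
         {x : ℕ → X // ∀ i, x i = f (x (i + 1))})
    (hσ : ∀ x, (σ x).1 = fun i => x.1 (i + 1)) :
    InitSpecPropD dist f ↔ InitSpecPropD (fun x y => supDist x.1 y.1) σ := by
  obtain ⟨C0, hCb⟩ := Metric.isBounded_iff.mp (isCompact_univ (X := X)).isBounded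
  set C : ℝ := max C0 0 with hCdef
  have hC : ∀ a b : X, dist a b ≤ C := fun a b =>
    le_trans (hCb (Set.mem_univ a) (Set.mem_univ b)) (le_max_left _ _)
  have hC0 : (0 : ℝ) ≤ C := le_max_right _ _
  have hσit : ∀ (j : ℕ) (x) (i : ℕ), (σ^[j] x).1 i = x.1 (i + j) :=
    sigma_iterate σ (fun x => x.1) hσ
  constructor
  · -- forward direction
    intro hF ε hε
    obtain ⟨Nf, hNf, hspec⟩ := hF ε hε
    obtain ⟨M, hM⟩ : ∃ M : ℕ, (1 / 2 : ℝ) ^ (M + 1) * C ≤ ε := by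
      rcases eq_or_lt_of_le hC0 with h | h
      · exact ⟨0, le_trans (le_of_eq (by rw [← h, mul_zero])) hε.le⟩
      · obtain ⟨M, hM⟩ := exists_pow_lt_of_lt_one (div_pos hε h)
          (by norm_num : (1 / 2 : ℝ) < 1)
        refine ⟨M, ?_⟩
        have h1 : (1 / 2 : ℝ) ^ (M + 1) ≤ (1 / 2 : ℝ) ^ M :=
          pow_le_pow_of_le_one (by norm_num) (by norm_num) (by omega)
        have h2 : (1 / 2 : ℝ) ^ M * C < ε := (lt_div_iff₀ h).mp hM
        nlinarith [h.le]
    refine ⟨Nf + M, by omega, ?_⟩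
    intro n hn x ℓ m hm
    obtain ⟨w, hw⟩ := hspec n hn
      (fun t => (x (n - 1 - t)).1 (ℓ (n - 1 - t) + M))
      (fun t => ℓ (n - 1 - t) + M)
      (fun t => m (n - 2 - t) - M)
      (by
        intro t ht
        have := hm (n - 2 - t) (by omega)
        omega)
    set K := (∑ t ∈ Finset.range (n - 1), (ℓ t + m t)) + ℓ (n - 1) + M with hK
    refine ⟨⟨limChain f hsurj w K, limChain_spec hsurj w K⟩, ?_⟩
    intro i hi j hj
    show supDist _ _ ≤ ε
    apply supDist_le
    intro m0
    rcases le_or_gt m0 M with hm0 | hm0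
    · -- main coordinates
      have ht : n - 1 - i < n := by omega
      have hti : n - 1 - (n - 1 - i) = i := by omega
      -- sum identity
      have hsum : (∑ u ∈ Finset.range (n - 1 - i),
            ((fun t => ℓ (n - 1 - t) + M) u + (fun t => m (n - 2 - t) - M) u))
          = ∑ u ∈ Finset.range (n - 1 - i), (ℓ (n - 1 - u) + m (n - 2 - u)) := by
        refine Finset.sum_congr rfl ?_
        intro u hu
        simp only [Finset.mem_range] at hu
        have := hm (n - 2 - u) (by omega)
        simp only
        omega
      have hkey := key_sum n ℓ m (n - 1 - i) ht
      rw [hti] at hkey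
      have htr := hw (n - 1 - i) ht (ℓ i + M - (j + m0))
        (by simp only [hti]; omega)
      rw [hsum] at htr
      -- identify the traced points
      have e1 : ((σ^[(∑ t ∈ Finset.range i, (ℓ t + m t)) + j]
            (⟨limChain f hsurj w K, limChain_spec hsurj w K⟩ :
              {x : ℕ → X // ∀ i, x i = f (x (i + 1))})).1 m0)
          = f^[(∑ u ∈ Finset.range (n - 1 - i), (ℓ (n - 1 - u) + m (n - 2 - u)))
              + (ℓ i + M - (j + m0))] w := by
        rw [hσit]
        have hle : m0 + ((∑ t ∈ Finset.range i, (ℓ t + m t)) + j) ≤ K := by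
          rw [hK]; omega
        show limChain f hsurj w K (m0 + ((∑ t ∈ Finset.range i, (ℓ t + m t)) + j)) = _
        rw [limChain_le hsurj w hle]
        congr 1
        rw [hK]
        omega
      have e2 : ((σ^[j] (x i)).1 m0)
          = f^[ℓ i + M - (j + m0)] ((x (n - 1 - (n - 1 - i))).1 (ℓ (n - 1 - (n - 1 - i)) + M)) := by
        rw [hσit, hti]
        have h5 := chain_iterate (x i).2 (ℓ i + M - (j + m0)) (m0 + j)
        rw [show m0 + j + (ℓ i + M - (j + m0)) = ℓ i + M by omega] at h5
        exact h5
      rw [e1, e2]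
      calc (1 / 2 : ℝ) ^ (m0 + 1) * dist _ _
          ≤ 1 * ε := by
            apply mul_le_mul (pow_le_one₀ (by norm_num) (by norm_num)) htr
              dist_nonneg (by norm_num)
        _ = ε := one_mul _
    · -- tail coordinates
      calc (1 / 2 : ℝ) ^ (m0 + 1) * dist _ _
          ≤ (1 / 2 : ℝ) ^ (m0 + 1) * C := by
            apply mul_le_mul_of_nonneg_left (hC _ _) (by positivity)
        _ ≤ (1 / 2 : ℝ) ^ (M + 1) * C := by
            apply mul_le_mul_of_nonneg_right _ hC0
            exact pow_le_pow_of_le_one (by norm_num) (by norm_num) (by omega)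
        _ ≤ ε := hM
  · -- backward direction
    intro hS ε hε
    obtain ⟨N, hN, hspec⟩ := hS (ε / 2) (half_pos hε)
    refine ⟨N, hN, ?_⟩
    intro n hn x ℓ m hm
    obtain ⟨Y, hY⟩ := hspec n hn
      (fun t => ⟨limChain f hsurj (x (n - 1 - t)) (ℓ (n - 1 - t)),
        limChain_spec hsurj _ _⟩)
      (fun t => ℓ (n - 1 - t))
      (fun t => m (n - 2 - t))
      (by
        intro t ht
        exact hm (n - 2 - t) (by omega))
    set K := (∑ t ∈ Finset.range (n - 1), (ℓ t + m t)) + ℓ (n - 1) with hK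
    refine ⟨Y.1 K, ?_⟩
    intro i hi j hj
    have ht : n - 1 - i < n := by omega
    have hti : n - 1 - (n - 1 - i) = i := by omega
    have hkey := key_sum n ℓ m (n - 1 - i) ht
    rw [hti] at hkey
    have htr := hY (n - 1 - i) ht (ℓ i - j) (by simp only [hti]; omega)
    simp only at htr
    rw [hti] at htr
    set A := (∑ t ∈ Finset.range (n - 1 - i), (ℓ (n - 1 - t) + m (n - 2 - t))) + (ℓ i - j)
      with hA
    have h0 := le_supDist hC (x := (σ^[A] Y).1)
      (y := (σ^[ℓ i - j] (⟨limChain f hsurj (x i) (ℓ i), limChain_spec hsurj _ _⟩ :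
        {x : ℕ → X // ∀ i, x i = f (x (i + 1))})).1) 0
    have h1 := le_trans h0 htr
    rw [pow_one, hσit, hσit] at h1
    have h3 : (⟨limChain f hsurj (x i) (ℓ i), limChain_spec hsurj _ _⟩ :
        {x : ℕ → X // ∀ i, x i = f (x (i + 1))}).1 (0 + (ℓ i - j)) = f^[j] (x i) := by
      show limChain f hsurj (x i) (ℓ i) (0 + (ℓ i - j)) = _
      rw [limChain_le hsurj _ (show 0 + (ℓ i - j) ≤ ℓ i by omega)]
      congr 1
      omega
    rw [h3] at h1
    have h4 : f^[(∑ t ∈ Finset.range i, (ℓ t + m t)) + j] (Y.1 K) = Y.1 (0 + A) := by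
      have h5 := chain_iterate Y.2 ((∑ t ∈ Finset.range i, (ℓ t + m t)) + j) (0 + A)
      rw [show 0 + A + ((∑ t ∈ Finset.range i, (ℓ t + m t)) + j) = K by
        rw [hA, hK]; omega] at h5
      exact h5.symm
    rw [h4]
    linarith
end

section
/- Let (X,f) be a dynamical system such that f is a homeomorphism. Then (X,f) has the initial specification property if and only if (X,f⁻¹) has the initial specification property. -/
private lemma symm_iter_iter {X : Type*} [TopologicalSpace X] (f : X ≃ₜ X)
    (a b : ℕ) (z : X) :
    (f.symm : X → X)^[a] ((f : X → X)^[a + b] z) = (f : X → X)^[b] z := by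
  rw [Function.iterate_add_apply]
  exact (Function.LeftInverse.iterate f.symm_apply_apply a) _

private lemma iter_symm_iter {X : Type*} [TopologicalSpace X] (f : X ≃ₜ X)
    {j ℓ : ℕ} (h : j ≤ ℓ) (x : X) :
    (f : X → X)^[ℓ - j] ((f.symm : X → X)^[ℓ] x) = (f.symm : X → X)^[j] x := by
  have h1 : (f.symm : X → X)^[ℓ] x = (f.symm : X → X)^[ℓ - j] ((f.symm : X → X)^[j] x) := by
    rw [← Function.iterate_add_apply]
    congr 1
    omega
  rw [h1]
  exact (Function.LeftInverse.iterate f.apply_symm_apply (ℓ - j)) _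

private lemma initspec_symm {X : Type*} [MetricSpace X] (f : X ≃ₜ X)
    (h : InitSpecPropD dist (f : X → X)) :
    InitSpecPropD dist (f.symm : X → X) := by
  intro ε hε
  obtain ⟨N, hN, H⟩ := h ε hε
  refine ⟨N, hN, ?_⟩
  intro n hn x ℓ m hm
  set x' : ℕ → X := fun p => (f.symm : X → X)^[ℓ (n-1-p)] (x (n-1-p)) with hx'
  set ℓ' : ℕ → ℕ := fun p => ℓ (n-1-p) with hℓ'
  set m' : ℕ → ℕ := fun p => m (n-2-p) with hm'
  obtain ⟨z, hz⟩ := H n hn x' ℓ' m' (fun p hp => hm (n-2-p) (by omega))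
  set T := (∑ t ∈ Finset.range (n-1), (ℓ t + m t)) + ℓ (n-1) with hT
  have key : ∀ p, p < n →
      (∑ t ∈ Finset.range p, (ℓ' t + m' t)) + ℓ (n-1-p)
        + (∑ t ∈ Finset.range (n-1-p), (ℓ t + m t)) = T := by
    intro p
    induction p with
    | zero => intro _; simp only [Finset.range_zero, Finset.sum_empty, Nat.zero_add, Nat.sub_zero, hT]; omega
    | succ p ih =>
      intro hp
      have hp' : p < n := by omega
      have prev := ih hp'
      rw [Finset.sum_range_succ]
      have e1 : ℓ' p = ℓ (n-1-p) := rfl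
      have e2 : m' p = m (n-2-p) := rfl
      have hi : n-1-(p+1) = n-2-p := by omega
      have h2 : n - 1 - p = (n - 2 - p) + 1 := by omega
      rw [h2, Finset.sum_range_succ] at prev
      rw [e1, e2, hi, h2]
      omega
  refine ⟨(f : X → X)^[T] z, ?_⟩
  intro i hi j hj
  set p := n - 1 - i with hpdef
  have hp : p < n := by omega
  have hnp : n - 1 - p = i := by omega
  have hk := key p hp
  rw [hnp] at hk
  have hzp := hz p hp (ℓ i - j) (by simp only [hℓ', hnp]; omega)
  have eb : T = ((∑ t ∈ Finset.range i, (ℓ t + m t)) + j)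
      + ((∑ t ∈ Finset.range p, (ℓ' t + m' t)) + (ℓ i - j)) := by omega
  have eL : (f.symm : X → X)^[(∑ t ∈ Finset.range i, (ℓ t + m t)) + j]
      ((f : X → X)^[T] z)
      = (f : X → X)^[(∑ t ∈ Finset.range p, (ℓ' t + m' t)) + (ℓ i - j)] z := by
    rw [eb]; exact symm_iter_iter f _ _ z
  have eR : (f : X → X)^[ℓ i - j] (x' p) = (f.symm : X → X)^[j] (x i) := by
    simp only [hx', hnp]
    exact iter_symm_iter f hj (x i)
  rw [eL]
  rw [← eR]
  exact hzp

/-- For a compact metric space `X` and a homeomorphism `f : X → X`, the system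
`(X, f)` has the initial specification property iff `(X, f⁻¹)` does. -/
theorem initial_specification_iff_inverse_initial_specification
    {X : Type*} [MetricSpace X] [CompactSpace X] (f : X ≃ₜ X) :
    InitSpecPropD dist (f : X → X) ↔ InitSpecPropD dist (f.symm : X → X) := by
  constructor
  · exact initspec_symm f
  · intro h
    simpa using initspec_symm f.symm h
end

section
/- Let X be a nonempty compact metric space and let F ⊆ X × X be a closed relation with p₁(F) = p₂(F) = X. Then the following four statements are equivalent: (i) the Mahavier dynamical system (X_F^+, σ_F^+) has the specification property; (ii) the two-sided Mahavier dynamical system (X_F, σ_F) has the specification property; (iii) (X_F^+, σ_F^+) has the initial specification property; (iv) (X_F, σ_F) has the initial specification property. -/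
/-- The sup-metric `d(x, y) = sup_m 2^{-|m|} d(x_m, y_m)` on two-sided
sequences. -/
noncomputable def supDistZ {X : Type*} [MetricSpace X] (x y : ℤ → X) : ℝ :=
  ⨆ m : ℤ, (1 / 2 : ℝ) ^ m.natAbs * dist (x m) (y m)

lemma specPropD_iff_initSpecPropD {A : Type*} [Nonempty A] (d : A → A → ℝ) (f : A → A)
    (hf : Function.Surjective f) : SpecPropD d f ↔ InitSpecPropD d f := by
  constructor
  · intro h ε hε
    obtain ⟨N, hN, hs⟩ := h ε hε
    refine ⟨N, hN, ?_⟩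
    intro n hn x ℓ m hm
    set S : ℕ → ℕ := fun i => ∑ t ∈ Finset.range i, (ℓ t + m t) with hSdef
    choose x' hx' using fun i => (hf.iterate (S i)) (x i)
    obtain ⟨y, hy⟩ := hs n x' S (fun i => S i + ℓ i)
      (fun i _ => Nat.le_add_right _ _)
      (fun i hi => by
        have h1 : S (i+1) = S i + (ℓ i + m i) := Finset.sum_range_succ _ _
        have h2 := hm i hi
        show S i + ℓ i + N ≤ S (i+1)
        omega)
    refine ⟨y, fun i hi j hj => ?_⟩
    have h1 := hy i hi (S i + j) (Nat.le_add_right _ _) (by omega)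
    have h2 : f^[S i + j] (x' i) = f^[j] (x i) := by
      rw [add_comm, Function.iterate_add_apply, hx']
    rwa [h2] at h1
  · intro h ε hε
    obtain ⟨N, hN, hs⟩ := h ε hε
    refine ⟨N, hN, ?_⟩
    intro n x k ℓ hkl hgap
    rcases Nat.eq_zero_or_pos n with rfl | hn
    · exact ⟨Classical.arbitrary A, fun i hi => absurd hi (Nat.not_lt_zero i)⟩
    · set ℓ' : ℕ → ℕ := fun i => ℓ i - k i with hl'
      set m' : ℕ → ℕ := fun i => k (i+1) - ℓ i with hm'
      have hS : ∀ i, i < n → (∑ t ∈ Finset.range i, (ℓ' t + m' t)) + k 0 = k i := by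
        intro i
        induction i with
        | zero => simp
        | succ i ih =>
          intro hi
          have hi' : i < n := by omega
          rw [Finset.sum_range_succ]
          have h1 := ih hi'
          have h2 := hkl i hi'
          have h3 := hgap i hi
          have h4 : ℓ' i = ℓ i - k i := rfl
          have h5 : m' i = k (i+1) - ℓ i := rfl
          omega
      obtain ⟨y, hy⟩ := hs n hn (fun i => f^[k i] (x i)) ℓ' m'
        (fun i hi => by have := hgap i hi; simp only [hm']; omega)
      obtain ⟨y', hy'⟩ := hf.iterate (k 0) y
      refine ⟨y', fun i hi j hj1 hj2 => ?_⟩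
      have hki : k 0 ≤ k i := by have := hS i hi; omega
      have h1 := hy i hi (j - k i) (by have := hkl i hi; simp only [hl']; omega)
      have e1 : (∑ t ∈ Finset.range i, (ℓ' t + m' t)) + (j - k i) = j - k 0 := by
        have := hS i hi; omega
      rw [e1] at h1
      have e2 : f^[j] y' = f^[j - k 0] y := by
        rw [← hy', ← Function.iterate_add_apply]
        congr 1; omega
      have e3 : f^[j - k i] (f^[k i] (x i)) = f^[j] (x i) := by
        rw [← Function.iterate_add_apply]
        congr 1; omega
      rw [e2, ← e3]
      exact h1

lemma nonempty_XFp {X : Type*} [Nonempty X] (F : Set (X × X))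
    (hp1 : Prod.fst '' F = Set.univ) :
    Nonempty {x : ℕ → X // ∀ i, (x i, x (i + 1)) ∈ F} := by
  have hsucc : ∀ a : X, ∃ b : X, (a, b) ∈ F := by
    intro a
    have ha : a ∈ Prod.fst '' F := by rw [hp1]; trivial
    obtain ⟨q, hq, rfl⟩ := ha
    exact ⟨q.2, hq⟩
  choose s hs using hsucc
  obtain ⟨a⟩ := ‹Nonempty X›
  exact ⟨⟨fun n => s^[n] a, fun n => by
    show (s^[n] a, s^[n+1] a) ∈ F
    rw [Function.iterate_succ_apply']; exact hs _⟩⟩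

lemma backward_extend {X : Type*} (F : Set (X × X))
    (hp2 : Prod.snd '' F = Set.univ)
    (y : {x : ℕ → X // ∀ i, (x i, x (i + 1)) ∈ F}) (c : ℤ) :
    ∃ w : {x : ℤ → X // ∀ i : ℤ, (x i, x (i + 1)) ∈ F},
      ∀ p : ℤ, 0 ≤ p + c → w.1 p = y.1 (p + c).toNat := by
  classical
  have hprec : ∀ a : X, ∃ b : X, (b, a) ∈ F := by
    intro a
    have ha : a ∈ Prod.snd '' F := by rw [hp2]; trivial
    obtain ⟨q, hq, rfl⟩ := ha
    exact ⟨q.1, hq⟩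
  choose pr hpr using hprec
  set g : ℕ → X := fun n => pr^[n] (y.1 0) with hg
  have hgF : ∀ n, (g (n + 1), g n) ∈ F := by
    intro n
    have h : g (n+1) = pr (g n) := Function.iterate_succ_apply' pr n (y.1 0)
    rw [h]; exact hpr (g n)
  refine ⟨⟨fun p => if 0 ≤ p + c then y.1 (p + c).toNat else g (-(p+c)).toNat, ?_⟩, ?_⟩
  · intro i
    by_cases h1 : 0 ≤ i + c
    · have h2 : 0 ≤ i + 1 + c := by omega
      simp only [if_pos h1, if_pos h2]
      have h3 : (i + 1 + c).toNat = (i + c).toNat + 1 := by omega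
      rw [h3]; exact y.2 _
    · by_cases h2 : 0 ≤ i + 1 + c
      · have h4 : (i+1+c).toNat = 0 := by omega
        have h6 : (-(i+c)).toNat = 1 := by omega
        simp only [if_neg h1, if_pos h2, h4, h6]
        have h7 := hgF 0
        have h8 : g 0 = y.1 0 := by simp [hg]
        rwa [h8] at h7
      · simp only [if_neg h1, if_neg h2]
        have h5 : (-(i+c)).toNat = (-(i+1+c)).toNat + 1 := by omega
        rw [h5]; exact hgF _
  · intro p hp
    simp only [if_pos hp]

/-- For a closed relation `F` on a nonempty compact metric space `X` with
`p₁(F) = p₂(F) = X`, the following are equivalent: (i) the Mahavier dynamical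
system `(X_F⁺, σ_F⁺)` has the specification property; (ii) the two-sided
Mahavier dynamical system `(X_F, σ_F)` has the specification property;
(iii) `(X_F⁺, σ_F⁺)` has the initial specification property; (iv) `(X_F, σ_F)`
has the initial specification property. -/
theorem mahavier_specification_tfae
    {X : Type*} [MetricSpace X] [CompactSpace X] [Nonempty X]
    (F : Set (X × X)) (hF : IsClosed F)
    (hp1 : Prod.fst '' F = Set.univ) (hp2 : Prod.snd '' F = Set.univ)
    (σp : {x : ℕ → X // ∀ i, (x i, x (i + 1)) ∈ F} →
          {x : ℕ → X // ∀ i, (x i, x (i + 1)) ∈ F})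
    (hσp : ∀ x, (σp x).1 = fun i => x.1 (i + 1))
    (σ : {x : ℤ → X // ∀ i : ℤ, (x i, x (i + 1)) ∈ F} →
         {x : ℤ → X // ∀ i : ℤ, (x i, x (i + 1)) ∈ F})
    (hσ : ∀ x, (σ x).1 = fun i => x.1 (i + 1)) :
    List.TFAE
      [SpecPropD (fun x y => supDist x.1 y.1) σp,
       SpecPropD (fun x y => supDistZ x.1 y.1) σ,
       InitSpecPropD (fun x y => supDist x.1 y.1) σp,
       InitSpecPropD (fun x y => supDistZ x.1 y.1) σ] := by
  classical
  obtain ⟨D, hD0, hD⟩ : ∃ D : ℝ, 0 ≤ D ∧ ∀ p q : X, dist p q ≤ D := by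
    obtain ⟨C, hC⟩ := Metric.isBounded_iff.mp (isCompact_univ (X := X)).isBounded
    exact ⟨max C 0, le_max_right _ _, fun p q =>
      le_trans (hC (Set.mem_univ p) (Set.mem_univ q)) (le_max_left _ _)⟩
  haveI hne : Nonempty {x : ℕ → X // ∀ i, (x i, x (i + 1)) ∈ F} := nonempty_XFp F hp1
  haveI hneZ : Nonempty {x : ℤ → X // ∀ i : ℤ, (x i, x (i + 1)) ∈ F} := by
    obtain ⟨y⟩ := hne
    obtain ⟨w, -⟩ := backward_extend F hp2 y 0
    exact ⟨w⟩
  -- iterate lemmas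
  have iterP : ∀ (j : ℕ) x (t : ℕ), (σp^[j] x).1 t = x.1 (t + j) := by
    intro j
    induction j with
    | zero => intro x t; simp
    | succ j ih =>
      intro x t
      rw [Function.iterate_succ_apply, ih (σp x) t, hσp x]
      show x.1 (t + j + 1) = x.1 (t + (j + 1))
      rw [Nat.add_assoc]
  have iterZ : ∀ (j : ℕ) x (m : ℤ), (σ^[j] x).1 m = x.1 (m + j) := by
    intro j
    induction j with
    | zero => intro x m; simp
    | succ j ih =>
      intro x m
      rw [Function.iterate_succ_apply, ih (σ x) m, hσ x]
      show x.1 (m + j + 1) = x.1 (m + (j + 1 : ℕ))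
      have e : m + ((j + 1 : ℕ) : ℤ) = m + j + 1 := by push_cast; ring
      rw [e]
  -- surjectivity
  have hsurjP : Function.Surjective σp := by
    intro x
    have hx0 : (x.1 0) ∈ Prod.snd '' F := by rw [hp2]; trivial
    obtain ⟨q, hq, hq2⟩ := hx0
    refine ⟨⟨fun n => Nat.rec q.1 (fun n _ => x.1 n) n, ?_⟩, ?_⟩
    · intro i
      cases i with
      | zero => show (q.1, x.1 0) ∈ F; rw [← hq2]; exact hq
      | succ i => exact x.2 i
    · apply Subtype.ext
      rw [hσp]
  have hsurjZ : Function.Surjective σ := by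
    intro x
    refine ⟨⟨fun p => x.1 (p - 1), fun i => ?_⟩, ?_⟩
    · show (x.1 (i - 1), x.1 (i + 1 - 1)) ∈ F
      have h := x.2 (i - 1)
      have e1 : i - 1 + 1 = i := by ring
      rw [e1] at h
      have e2 : i + 1 - 1 = i := by ring
      rw [e2]
      exact h
    · apply Subtype.ext
      rw [hσ]
      funext i
      show x.1 (i + 1 - 1) = x.1 i
      have e3 : i + 1 - 1 = i := by ring
      rw [e3]
  -- bounds
  have bddP : ∀ a b : ℕ → X,
      BddAbove (Set.range fun m : ℕ => (1/2:ℝ)^(m+1) * dist (a m) (b m)) := by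
    intro a b
    refine ⟨D, ?_⟩
    rintro r ⟨m, rfl⟩
    calc (1/2:ℝ)^(m+1) * dist (a m) (b m) ≤ 1 * D :=
          mul_le_mul (pow_le_one₀ (by norm_num) (by norm_num)) (hD _ _) dist_nonneg zero_le_one
      _ = D := one_mul D
  have bddZ : ∀ a b : ℤ → X,
      BddAbove (Set.range fun m : ℤ => (1/2:ℝ)^(m.natAbs) * dist (a m) (b m)) := by
    intro a b
    refine ⟨D, ?_⟩
    rintro r ⟨m, rfl⟩
    calc (1/2:ℝ)^(m.natAbs) * dist (a m) (b m) ≤ 1 * D :=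
          mul_le_mul (pow_le_one₀ (by norm_num) (by norm_num)) (hD _ _) dist_nonneg zero_le_one
      _ = D := one_mul D
  have leP : ∀ (a b : ℕ → X) (m : ℕ),
      (1/2:ℝ)^(m+1) * dist (a m) (b m) ≤ supDist a b :=
    fun a b m => le_ciSup (bddP a b) m
  have leZ : ∀ (a b : ℤ → X) (m : ℤ),
      (1/2:ℝ)^(m.natAbs) * dist (a m) (b m) ≤ supDistZ a b :=
    fun a b m => le_ciSup (bddZ a b) m
  -- (i) → (ii)
  have h12 : SpecPropD (fun x y => supDist x.1 y.1) σp →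
      SpecPropD (fun x y => supDistZ x.1 y.1) σ := by
    intro hs ε hε
    obtain ⟨M, hM⟩ : ∃ M : ℕ, (1/2:ℝ)^M * D ≤ ε := by
      have hD1 : (0:ℝ) < D + 1 := by linarith
      obtain ⟨M, hM⟩ := exists_pow_lt_of_lt_one (show (0:ℝ) < ε/(D+1) from div_pos hε hD1)
        (by norm_num : (1/2:ℝ) < 1)
      refine ⟨M, ?_⟩
      have h1 : (1/2:ℝ)^M * D ≤ (ε/(D+1)) * (D+1) :=
        mul_le_mul hM.le (by linarith) hD0 (le_of_lt (div_pos hε hD1))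
      rwa [div_mul_cancel₀ _ (ne_of_gt hD1)] at h1
    obtain ⟨N₁, hN₁, hsp⟩ := hs (ε/2) (by linarith)
    refine ⟨N₁ + 2*M, by omega, ?_⟩
    intro n z k ℓ hkl hgap
    set x : ℕ → {x : ℕ → X // ∀ i, (x i, x (i + 1)) ∈ F} := fun i =>
      ⟨fun t => (z i).1 ((t:ℤ) - M), fun t => by
        show ((z i).1 ((t:ℤ) - M), (z i).1 (((t+1:ℕ):ℤ) - M)) ∈ F
        have h := (z i).2 ((t:ℤ) - M)
        have e : ((t+1:ℕ):ℤ) - M = (t:ℤ) - M + 1 := by push_cast; ring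
        rw [e]
        exact h⟩ with hxdef
    obtain ⟨y, hy⟩ := hsp n x k (fun i => ℓ i + 2*M)
      (fun i hi => by show k i ≤ ℓ i + 2*M; have := hkl i hi; omega)
      (fun i hi => by show ℓ i + 2*M + N₁ ≤ k (i+1); have := hgap i hi; omega)
    obtain ⟨w, hw⟩ := backward_extend F hp2 y (M : ℤ)
    refine ⟨w, ?_⟩
    intro i hi j hj1 hj2
    show supDistZ ((σ^[j] w).1) ((σ^[j] (z i)).1) ≤ ε
    rw [supDistZ]
    refine Real.iSup_le (fun m => ?_) hε.le
    rw [iterZ j w m, iterZ j (z i) m]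
    by_cases hm : M ≤ m.natAbs
    · calc (1/2:ℝ)^(m.natAbs) * dist (w.1 (m+j)) ((z i).1 (m+j))
          ≤ (1/2:ℝ)^M * D :=
            mul_le_mul (pow_le_pow_of_le_one (by norm_num) (by norm_num) hm)
              (hD _ _) dist_nonneg (by positivity)
        _ ≤ ε := hM
    · push_neg at hm
      set j₁ : ℕ := (m + (j:ℤ) + M).toNat with hj₁
      have hd : dist (y.1 j₁) ((x i).1 j₁) ≤ ε := by
        have h2 := leP ((σp^[j₁] y).1) ((σp^[j₁] (x i)).1) 0
        rw [iterP j₁ y 0, iterP j₁ (x i) 0] at h2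
        have h3 := le_trans h2 (hy i hi j₁ (by omega) (by show j₁ ≤ ℓ i + 2*M; omega))
        simp only [Nat.zero_add, pow_one] at h3
        linarith
      have e4 : (j₁ : ℤ) = m + (j:ℤ) + M := Int.toNat_of_nonneg (by omega)
      have e5 : w.1 (m + j) = y.1 j₁ := by
        have e8 : (m + (j:ℤ) + M).toNat = j₁ := by omega
        rw [hw (m + j) (by omega), e8]
      have e6 : (z i).1 ((m:ℤ) + j) = (x i).1 j₁ := by
        show _ = (z i).1 ((j₁:ℤ) - M)
        have e7 : (j₁:ℤ) - M = (m:ℤ) + j := by rw [e4]; ring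
        rw [e7]
      rw [e5, e6]
      calc (1/2:ℝ)^(m.natAbs) * dist (y.1 j₁) ((x i).1 j₁)
          ≤ 1 * ε :=
            mul_le_mul (pow_le_one₀ (by norm_num) (by norm_num)) hd dist_nonneg zero_le_one
        _ = ε := one_mul ε
  -- (ii) → (i)
  have h21 : SpecPropD (fun x y => supDistZ x.1 y.1) σ →
      SpecPropD (fun x y => supDist x.1 y.1) σp := by
    intro hs ε hε
    obtain ⟨N, hN, hsp⟩ := hs ε hε
    refine ⟨N, hN, ?_⟩
    intro n x k ℓ hkl hgap
    choose z hz using fun i => backward_extend F hp2 (x i) (-1 : ℤ)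
    obtain ⟨w, hw⟩ := hsp n z k ℓ hkl hgap
    refine ⟨⟨fun t => w.1 ((t:ℤ)+1), fun t => by
      show (w.1 ((t:ℤ)+1), w.1 (((t+1:ℕ):ℤ)+1)) ∈ F
      have h := w.2 ((t:ℤ)+1)
      have e : ((t+1:ℕ):ℤ) + 1 = (t:ℤ) + 1 + 1 := by push_cast; ring
      rw [e]
      exact h⟩, ?_⟩
    intro i hi j hj1 hj2
    show supDist _ ((σp^[j] (x i)).1) ≤ ε
    rw [supDist]
    refine Real.iSup_le (fun t => ?_) hε.le
    rw [iterP j _ t, iterP j (x i) t]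
    have h2 := leZ ((σ^[j] w).1) ((σ^[j] (z i)).1) ((t:ℤ)+1)
    rw [iterZ j w ((t:ℤ)+1), iterZ j (z i) ((t:ℤ)+1)] at h2
    have h3 := le_trans h2 (hw i hi j hj1 hj2)
    have e1 : ((t:ℤ) + 1 + (j:ℤ)) = ((t+j:ℕ):ℤ) + 1 := by push_cast; ring
    rw [e1] at h3
    have e2 : (z i).1 (((t+j:ℕ):ℤ) + 1) = (x i).1 (t+j) := by
      have e9 : (((t+j:ℕ):ℤ) + 1 + -1).toNat = t + j := by omega
      rw [hz i (((t+j:ℕ):ℤ) + 1) (by omega), e9]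
    rw [e2] at h3
    have e3 : (((t:ℤ)+1).natAbs) = t + 1 := by omega
    rw [e3] at h3
    exact h3
  haveI : Nonempty {x : ℕ → X // ∀ i, (x i, x (i + 1)) ∈ F} := hne
  haveI : Nonempty {x : ℤ → X // ∀ i : ℤ, (x i, x (i + 1)) ∈ F} := hneZ
  tfae_have 1 ↔ 2 := ⟨h12, h21⟩
  tfae_have 1 ↔ 3 := specPropD_iff_initSpecPropD _ _ hsurjP
  tfae_have 2 ↔ 4 := specPropD_iff_initSpecPropD _ _ hsurjZ
  tfae_finish
end

section
/- Let (X,F) and (Y,G) be CR-dynamical systems that are topologically conjugate. If (X,F) has the specification property (SP), then (Y,G) has the specification property. -/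
/-- Iterated images of a point under a relation `F ⊆ X × X`:
`relIter F 0 x = {x}` and `relIter F (n+1) x = ⋃ z ∈ relIter F n x, F(z)`. -/
def relIter {X : Type*} (F : Set (X × X)) : ℕ → X → Set X
  | 0, x => {x}
  | n + 1, x => {y | ∃ z ∈ relIter F n x, (z, y) ∈ F}

/-- The distance between two sets: `inf {dist a b | a ∈ A, b ∈ B}`. -/
noncomputable def setDist {X : Type*} [MetricSpace X] (A B : Set X) : ℝ :=
  sInf (Set.image2 dist A B)

/-- The specification property (`SP`) for a CR-dynamical system `(X, F)`. -/
def CRSpec {X : Type*} [MetricSpace X] (F : Set (X × X)) : Prop :=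
  ∀ ε : ℝ, 0 < ε → ∃ N : ℕ, 0 < N ∧
    ∀ (n : ℕ) (x : ℕ → X) (k ℓ : ℕ → ℕ),
      (∀ i, i < n → k i ≤ ℓ i) →
      (∀ i, i + 1 < n → ℓ i + N ≤ k (i + 1)) →
      ∃ y : X, ∀ i, i < n → ∀ j, k i ≤ j → j ≤ ℓ i →
        setDist (relIter F j y) (relIter F j (x i)) ≤ ε

/-- The Hausdorff specification property (`HSP`) for a CR-dynamical system
`(X, F)`. -/
def CRHSpec {X : Type*} [MetricSpace X] (F : Set (X × X)) : Prop :=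
  ∀ ε : ℝ, 0 < ε → ∃ N : ℕ, 0 < N ∧
    ∀ (n : ℕ) (x : ℕ → X) (k ℓ : ℕ → ℕ),
      (∀ i, i < n → k i ≤ ℓ i) →
      (∀ i, i + 1 < n → ℓ i + N ≤ k (i + 1)) →
      ∃ y : X, ∀ i, i < n → ∀ j, k i ≤ j → j ≤ ℓ i →
        Metric.hausdorffDist (relIter F j y) (relIter F j (x i)) ≤ ε

/-- The initial specification property (`ISP`) for a CR-dynamical system
`(X, F)`. -/
def CRInitSpec {X : Type*} [MetricSpace X] (F : Set (X × X)) : Prop :=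
  ∀ ε : ℝ, 0 < ε → ∃ N : ℕ, 0 < N ∧
    ∀ (n : ℕ), 1 ≤ n → ∀ (x : ℕ → X) (ℓ m : ℕ → ℕ),
      (∀ i, i + 1 < n → N ≤ m i) →
      ∃ y : X, ∀ i, i < n → ∀ j, j ≤ ℓ i →
        setDist (relIter F ((∑ t ∈ Finset.range i, (ℓ t + m t)) + j) y)
          (relIter F j (x i)) ≤ ε

/-- The Hausdorff initial specification property (`HISP`) for a CR-dynamical
system `(X, F)`. -/
def CRHInitSpec {X : Type*} [MetricSpace X] (F : Set (X × X)) : Prop :=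
  ∀ ε : ℝ, 0 < ε → ∃ N : ℕ, 0 < N ∧
    ∀ (n : ℕ), 1 ≤ n → ∀ (x : ℕ → X) (ℓ m : ℕ → ℕ),
      (∀ i, i + 1 < n → N ≤ m i) →
      ∃ y : X, ∀ i, i < n → ∀ j, j ≤ ℓ i →
        Metric.hausdorffDist
          (relIter F ((∑ t ∈ Finset.range i, (ℓ t + m t)) + j) y)
          (relIter F j (x i)) ≤ ε


private lemma relIter_conj_image {X Y : Type*} [TopologicalSpace X] [TopologicalSpace Y]
    (F : Set (X × X)) (G : Set (Y × Y)) (φ : X ≃ₜ Y)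
    (hconj : ∀ x y : X, (x, y) ∈ F ↔ (φ x, φ y) ∈ G) :
    ∀ (n : ℕ) (x : X), relIter G n (φ x) = φ '' relIter F n x := by
  intro n
  induction n with
  | zero => intro x; simp [relIter]
  | succ n ih =>
    intro x
    ext y
    simp only [relIter, ih, Set.mem_image, Set.mem_setOf_eq]
    constructor
    · rintro ⟨z, ⟨w, hw, rfl⟩, hzy⟩
      refine ⟨φ.symm y, ⟨w, hw, ?_⟩, by simp⟩
      rw [hconj]
      simpa using hzy
    · rintro ⟨v, ⟨w, hw, hwv⟩, rfl⟩
      exact ⟨φ w, ⟨w, hw, rfl⟩, (hconj w v).1 hwv⟩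

private lemma setDist_image_le {X Y : Type*} [MetricSpace X] [MetricSpace Y]
    (φ : X → Y) {A B : Set X} {δ ε : ℝ} (hε : 0 < ε) (hδ : 0 < δ)
    (hφ : ∀ a b : X, dist a b < δ → dist (φ a) (φ b) ≤ ε)
    (hAB : setDist A B ≤ δ / 2) : setDist (φ '' A) (φ '' B) ≤ ε := by
  rcases Set.eq_empty_or_nonempty (Set.image2 dist A B) with he | hne
  · rcases Set.image2_eq_empty_iff.mp he with hA | hB
    · simp [setDist, hA, Real.sInf_empty, hε.le]
    · simp [setDist, hB, Real.sInf_empty, hε.le]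
  · have hbdd : BddBelow (Set.image2 dist A B) := by
      refine ⟨0, fun d hd => ?_⟩
      rcases hd with ⟨a, _, b, _, rfl⟩
      exact dist_nonneg
    have hlt : sInf (Set.image2 dist A B) < δ := lt_of_le_of_lt hAB (by linarith)
    obtain ⟨d, hd, hdlt⟩ := (csInf_lt_iff hbdd hne).mp hlt
    rcases hd with ⟨a, ha, b, hb, rfl⟩
    have hmem : dist (φ a) (φ b) ∈ Set.image2 dist (φ '' A) (φ '' B) :=
      ⟨φ a, ⟨a, ha, rfl⟩, φ b, ⟨b, hb, rfl⟩, rfl⟩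
    have hbdd2 : BddBelow (Set.image2 dist (φ '' A) (φ '' B)) := by
      refine ⟨0, fun d hd => ?_⟩
      rcases hd with ⟨a, _, b, _, rfl⟩
      exact dist_nonneg
    exact le_trans (csInf_le hbdd2 hmem) (hφ a b hdlt)

/-- If the CR-dynamical systems `(X, F)` and `(Y, G)` are topologically
conjugate and `(X, F)` has the specification property, then so does `(Y, G)`. -/
theorem crSpec_of_conjugate
    {X Y : Type*} [MetricSpace X] [CompactSpace X] [Nonempty X]
    [MetricSpace Y] [CompactSpace Y] [Nonempty Y]
    (F : Set (X × X)) (G : Set (Y × Y)) (hF : IsClosed F) (hG : IsClosed G)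
    (φ : X ≃ₜ Y) (hconj : ∀ x y : X, (x, y) ∈ F ↔ (φ x, φ y) ∈ G)
    (h : CRSpec F) : CRSpec G := by
  intro ε hε
  have hUC : UniformContinuous (φ : X → Y) :=
    CompactSpace.uniformContinuous_of_continuous φ.continuous
  obtain ⟨δ, hδ, hδε⟩ := Metric.uniformContinuous_iff.mp hUC ε hε
  obtain ⟨N, hN, hspec⟩ := h (δ / 2) (by positivity)
  refine ⟨N, hN, ?_⟩
  intro n x k ℓ hkl hgap
  obtain ⟨y, hy⟩ := hspec n (fun i => φ.symm (x i)) k ℓ hkl hgap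
  refine ⟨φ y, ?_⟩
  intro i hi j hj1 hj2
  have hd := hy i hi j hj1 hj2
  have h1 : relIter G j (φ y) = φ '' relIter F j y :=
    relIter_conj_image F G φ hconj j y
  have h2 : relIter G j (x i) = φ '' relIter F j (φ.symm (x i)) := by
    have := relIter_conj_image F G φ hconj j (φ.symm (x i))
    simpa using this
  rw [h1, h2]
  exact setDist_image_le φ hε hδ (fun a b hab => (hδε hab).le) hd
end

section
/- Let (X,F) be a CR-dynamical system with p₁(F) = p₂(F) = X (so that all iterated images F^k(x) are nonempty and every point has a k-th F-preimage for every k). If (X,F) has the initial specification property (ISP), then (X,F) has the specification property (SP). -/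
lemma relIter_add_subset {X : Type*} {F : Set (X × X)} {a : ℕ} {x z : X}
    (hz : z ∈ relIter F a x) : ∀ b, relIter F b z ⊆ relIter F (a + b) x := by
  intro b
  induction b with
  | zero => intro w hw; rcases hw with rfl; simpa using hz
  | succ b ih =>
      rintro w ⟨u, hu, huw⟩
      exact ⟨u, ih hu, huw⟩

lemma relIter_nonempty {X : Type*} {F : Set (X × X)}
    (hp1 : Prod.fst '' F = Set.univ) (k : ℕ) (x : X) :
    (relIter F k x).Nonempty := by
  induction k with
  | zero => exact ⟨x, rfl⟩
  | succ k ih =>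
      obtain ⟨z, hz⟩ := ih
      have : z ∈ Prod.fst '' F := by rw [hp1]; trivial
      obtain ⟨⟨a, b⟩, hp, hpz⟩ := this
      simp only at hpz
      subst hpz
      exact ⟨b, a, hz, hp⟩

lemma relIter_preimage {X : Type*} {F : Set (X × X)}
    (hp2 : Prod.snd '' F = Set.univ) (k : ℕ) (x : X) :
    ∃ y, x ∈ relIter F k y := by
  induction k with
  | zero => exact ⟨x, rfl⟩
  | succ k ih =>
      obtain ⟨y', hy'⟩ := ih
      have : y' ∈ Prod.snd '' F := by rw [hp2]; trivial
      obtain ⟨⟨a, b⟩, hp, hpb⟩ := this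
      simp only at hpb
      subst hpb
      have h1 : b ∈ relIter F 1 a := ⟨a, rfl, hp⟩
      refine ⟨a, ?_⟩
      have := relIter_add_subset h1 k hy'
      simpa [Nat.add_comm] using this

lemma setDist_le_of_subset {X : Type*} [MetricSpace X] {A B A' B' : Set X}
    (hA : A.Nonempty) (hB : B.Nonempty) (hAA : A ⊆ A') (hBB : B ⊆ B') :
    setDist A' B' ≤ setDist A B := by
  apply csInf_le_csInf
  · exact ⟨0, fun r hr => by
      rcases hr with ⟨a, ha, b, hb, rfl⟩
      exact dist_nonneg⟩
  · exact hA.image2 hB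
  · exact Set.image2_subset hAA hBB

/-- If a CR-dynamical system `(X, F)` with `p₁(F) = p₂(F) = X` has the initial
specification property (ISP), then it has the specification property (SP). -/
theorem crSpec_of_crInitSpec
    {X : Type*} [MetricSpace X] [CompactSpace X] [Nonempty X]
    (F : Set (X × X)) (hF : IsClosed F)
    (hp1 : Prod.fst '' F = Set.univ) (hp2 : Prod.snd '' F = Set.univ)
    (h : CRInitSpec F) : CRSpec F := by
  intro ε hε
  obtain ⟨N, hN, hISP⟩ := h ε hε
  refine ⟨N, hN, ?_⟩
  intro n x k ℓ hkl hgap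
  rcases Nat.eq_zero_or_pos n with rfl | hn
  · exact ⟨Classical.arbitrary X, fun i hi => absurd hi (Nat.not_lt_zero i)⟩
  -- choose z i ∈ F^(k i) (x i)
  have hz : ∀ i, ∃ z, z ∈ relIter F (k i) (x i) :=
    fun i => relIter_nonempty hp1 (k i) (x i)
  choose z hzmem using hz
  set ℓ' : ℕ → ℕ := fun i => ℓ i - k i with hℓ'
  set m : ℕ → ℕ := fun i => k (i + 1) - ℓ i with hm
  have hmN : ∀ i, i + 1 < n → N ≤ m i := by
    intro i hi
    have := hgap i hi
    simp only [hm]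
    omega
  obtain ⟨y0, hy0⟩ := hISP n hn z ℓ' m hmN
  -- telescoping: k 0 + S i = k i for i < n
  have hsum : ∀ i, i < n → k 0 + (∑ t ∈ Finset.range i, (ℓ' t + m t)) = k i := by
    intro i hi
    induction i with
    | zero => simp
    | succ i ih =>
        have hi' : i < n := Nat.lt_of_succ_lt hi
        have h1 := hkl i hi'
        have h2 := hgap i hi
        have := ih hi'
        rw [Finset.sum_range_succ]
        have h3 : ℓ' i = ℓ i - k i := rfl
        have h4 : m i = k (i + 1) - ℓ i := rfl
        omega
  obtain ⟨y, hy⟩ := relIter_preimage hp2 (k 0) y0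
  refine ⟨y, ?_⟩
  intro i hi j hkj hjl
  have hSi := hsum i hi
  set S := ∑ t ∈ Finset.range i, (ℓ' t + m t) with hS
  have hj' : j - k i ≤ ℓ' i := by simp only [hℓ']; omega
  have hkey := hy0 i hi (j - k i) hj'
  -- relIter F (S + (j - k i)) y0 ⊆ relIter F j y
  have hk0 : k 0 ≤ j := by omega
  have hsub1 : relIter F (S + (j - k i)) y0 ⊆ relIter F j y := by
    have := relIter_add_subset hy (S + (j - k i))
    have heq : k 0 + (S + (j - k i)) = j := by omega
    rwa [heq] at this
  have hsub2 : relIter F (j - k i) (z i) ⊆ relIter F j (x i) := by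
    have := relIter_add_subset (hzmem i) (j - k i)
    have heq : k i + (j - k i) = j := by omega
    rwa [heq] at this
  calc setDist (relIter F j y) (relIter F j (x i))
      ≤ setDist (relIter F (S + (j - k i)) y0) (relIter F (j - k i) (z i)) :=
        setDist_le_of_subset (relIter_nonempty hp1 _ _)
          (relIter_nonempty hp1 _ _) hsub1 hsub2
    _ ≤ ε := hkey
end

section
/- Let (X,F) be a CR-dynamical system. If there is a positive integer n₀ such that F^{n₀}(x) ∩ F^{n₀}(y) ≠ ∅ for all x,y ∈ X, then (X,F) has the specification property (SP). -/
lemma mem_relIter_add {X : Type*} (F : Set (X × X)) :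
    ∀ (t m : ℕ) (x y : X),
      y ∈ relIter F (m + t) x ↔ ∃ w ∈ relIter F m x, y ∈ relIter F t w := by
  intro t
  induction t with
  | zero => intro m x y; simp [relIter]
  | succ t ih =>
    intro m x y
    constructor
    · rintro ⟨z, hz, hzy⟩
      obtain ⟨w, hw, hzw⟩ := (ih m x z).1 hz
      exact ⟨w, hw, z, hzw, hzy⟩
    · rintro ⟨w, hw, z, hz, hzy⟩
      exact ⟨z, (ih m x z).2 ⟨w, hw, hz⟩, hzy⟩

lemma relIter_nonempty_down {X : Type*} (F : Set (X × X)) {n : ℕ} {x : X}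
    (h : (relIter F (n + 1) x).Nonempty) : (relIter F n x).Nonempty := by
  obtain ⟨y, z, hz, _⟩ := h
  exact ⟨z, hz⟩

lemma relIter_one_nonempty {X : Type*} (F : Set (X × X)) :
    ∀ (m : ℕ) (x : X), (relIter F (m + 1) x).Nonempty → (relIter F 1 x).Nonempty := by
  intro m
  induction m with
  | zero => intro x h; exact h
  | succ m ih => intro x h; exact ih x (relIter_nonempty_down F h)

lemma relIter_nonempty_s13 {X : Type*} (F : Set (X × X))
    (h1 : ∀ x : X, (relIter F 1 x).Nonempty) :
    ∀ (n : ℕ) (x : X), (relIter F n x).Nonempty := by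
  intro n
  induction n with
  | zero => intro x; exact ⟨x, rfl⟩
  | succ n ih =>
    intro x
    obtain ⟨y, hy⟩ := ih x
    obtain ⟨z, w, hw, hzw⟩ := h1 y
    have hwy : w = y := hw
    exact ⟨z, y, hy, hwy ▸ hzw⟩

lemma setDist_le_of_inter {X : Type*} [MetricSpace X] {A B : Set X} {ε : ℝ}
    (hε : 0 ≤ ε) (h : (A ∩ B).Nonempty) : setDist A B ≤ ε := by
  obtain ⟨w, hwA, hwB⟩ := h
  have hmem : dist w w ∈ Set.image2 dist A B := Set.mem_image2_of_mem hwA hwB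
  have hbdd : BddBelow (Set.image2 dist A B) := by
    refine ⟨0, ?_⟩
    rintro r ⟨a, ha, b, hb, rfl⟩
    exact dist_nonneg
  calc setDist A B ≤ dist w w := csInf_le hbdd hmem
    _ = 0 := dist_self w
    _ ≤ ε := hε

/-- If there is a positive integer `n₀` such that `F^{n₀}(x) ∩ F^{n₀}(y) ≠ ∅`
for all `x, y ∈ X`, then the CR-dynamical system `(X, F)` has the
specification property (SP). -/
theorem crSpec_of_iter_intersect
    {X : Type*} [MetricSpace X] [CompactSpace X] [Nonempty X]
    (F : Set (X × X)) (hF : IsClosed F)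
    (h : ∃ n₀ : ℕ, 0 < n₀ ∧ ∀ x y : X, (relIter F n₀ x ∩ relIter F n₀ y).Nonempty) :
    CRSpec F := by
  obtain ⟨n₀, hn₀, h₀⟩ := h
  -- every iterate set is nonempty
  have hne : ∀ (n : ℕ) (x : X), (relIter F n x).Nonempty := by
    refine relIter_nonempty_s13 F fun x => ?_
    obtain ⟨m, rfl⟩ : ∃ m, n₀ = m + 1 := ⟨n₀ - 1, by omega⟩
    exact relIter_one_nonempty F m x ((h₀ x x).mono (Set.inter_subset_left))
  -- the intersection property for all exponents ≥ n₀
  have hinter : ∀ (m p : ℕ) (x y : X), n₀ ≤ m → n₀ ≤ p →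
      (relIter F m x ∩ relIter F p y).Nonempty := by
    intro m p x y hm hp
    obtain ⟨z, hz⟩ := hne (m - n₀) x
    obtain ⟨z', hz'⟩ := hne (p - n₀) y
    obtain ⟨w, hw1, hw2⟩ := h₀ z z'
    refine ⟨w, ?_, ?_⟩
    · have : w ∈ relIter F ((m - n₀) + n₀) x :=
        (mem_relIter_add F n₀ (m - n₀) x w).2 ⟨z, hz, hw1⟩
      rwa [Nat.sub_add_cancel hm] at this
    · have : w ∈ relIter F ((p - n₀) + n₀) y :=
        (mem_relIter_add F n₀ (p - n₀) y w).2 ⟨z', hz', hw2⟩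
      rwa [Nat.sub_add_cancel hp] at this
  intro ε hε
  refine ⟨n₀, hn₀, ?_⟩
  intro n x k ℓ hkl hgap
  have key : ∀ m, m ≤ n → ∃ y : X,
      (∀ i, i < m → ∀ j, k i ≤ j → j ≤ ℓ i →
        (relIter F j y ∩ relIter F j (x i)).Nonempty) ∧
      (∀ p, m = p + 1 → ∃ u, u ∈ relIter F (ℓ p) y ∩ relIter F (ℓ p) (x p)) := by
    intro m
    induction m with
    | zero =>
      intro _
      exact ⟨x 0, fun i hi => absurd hi (Nat.not_lt_zero i), fun p hp => by omega⟩
    | succ m ih =>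
      intro hm
      obtain ⟨y, hy, hu⟩ := ih (Nat.le_of_succ_le hm)
      -- produce a point y' together with w ∈ F^{k m}(y') ∩ F^{k m}(x m),
      -- such that y' still traces the earlier segments
      have step : ∃ y' : X,
          (∀ i, i < m → ∀ j, k i ≤ j → j ≤ ℓ i →
            (relIter F j y' ∩ relIter F j (x i)).Nonempty) ∧
          ∃ w, w ∈ relIter F (k m) y' ∩ relIter F (k m) (x m) := by
        cases m with
        | zero =>
          refine ⟨x 0, fun i hi => absurd hi (Nat.not_lt_zero i), ?_⟩
          obtain ⟨w, hw⟩ := hne (k 0) (x 0)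
          exact ⟨w, hw, hw⟩
        | succ m' =>
          obtain ⟨u, hu1, hu2⟩ := hu m' rfl
          have hgap' : ℓ m' + n₀ ≤ k (m' + 1) := hgap m' (by omega)
          obtain ⟨w, hw1, hw2⟩ := hinter (k (m' + 1) - ℓ m') (k (m' + 1)) u
            (x (m' + 1)) (by omega) (by omega)
          refine ⟨y, hy, w, ?_, hw2⟩
          have : w ∈ relIter F (ℓ m' + (k (m' + 1) - ℓ m')) y :=
            (mem_relIter_add F _ _ y w).2 ⟨u, hu1, hw1⟩
          rwa [Nat.add_sub_cancel' (by omega : ℓ m' ≤ k (m' + 1))] at this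
      obtain ⟨y', hy', w, hw1, hw2⟩ := step
      have htrack : ∀ j, k m ≤ j → j ≤ ℓ m →
          (relIter F j y' ∩ relIter F j (x m)).Nonempty := by
        intro j hkj hjl
        obtain ⟨v, hv⟩ := hne (j - k m) w
        refine ⟨v, ?_, ?_⟩
        · have : v ∈ relIter F (k m + (j - k m)) y' :=
            (mem_relIter_add F _ _ y' v).2 ⟨w, hw1, hv⟩
          rwa [Nat.add_sub_cancel' hkj] at this
        · have : v ∈ relIter F (k m + (j - k m)) (x m) :=
            (mem_relIter_add F _ _ (x m) v).2 ⟨w, hw2, hv⟩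
          rwa [Nat.add_sub_cancel' hkj] at this
      refine ⟨y', ?_, ?_⟩
      · intro i hi j hkj hjl
        rcases Nat.lt_succ_iff_lt_or_eq.1 hi with hi' | rfl
        · exact hy' i hi' j hkj hjl
        · exact htrack j hkj hjl
      · intro p hp
        have hpm : p = m := by omega
        subst hpm
        exact htrack (ℓ p) (hkl p (by omega)) le_rfl
  obtain ⟨y, hy, -⟩ := key n le_rfl
  exact ⟨y, fun i hi j hkj hjl => setDist_le_of_inter hε.le (hy i hi j hkj hjl)⟩
end

section
/- Let (X,F) be a CR-dynamical system with p₁(F) = X (so all iterated images F^k(x) are nonempty). If for every ε > 0 there is a positive integer n₀ such that H_d(F^{n₀+j}(x), F^{n₀+j}(y)) ≤ ε for all x,y ∈ X and every nonnegative integer j, then (X,F) has the Hausdorff specification property (HSP). -/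
/-- Let `(X, F)` be a CR-dynamical system with `p₁(F) = X`. If for every
`ε > 0` there is a positive integer `n₀` such that
`H_d(F^{n₀+j}(x), F^{n₀+j}(y)) ≤ ε` for all `x, y ∈ X` and all `j ≥ 0`, then
`(X, F)` has the Hausdorff specification property (HSP). -/
theorem crHSpec_of_eventually_hausdorff_close
    {X : Type*} [MetricSpace X] [CompactSpace X] [Nonempty X]
    (F : Set (X × X)) (hF : IsClosed F)
    (hp1 : Prod.fst '' F = Set.univ)
    (h : ∀ ε : ℝ, 0 < ε → ∃ n₀ : ℕ, 0 < n₀ ∧ ∀ x y : X, ∀ j : ℕ,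
      Metric.hausdorffDist (relIter F (n₀ + j) x) (relIter F (n₀ + j) y) ≤ ε) :
    CRHSpec F := by
  intro ε hε
  obtain ⟨n₀, hn₀, hclose⟩ := h ε hε
  refine ⟨n₀, hn₀, ?_⟩
  intro n x k ℓ hkl hspace
  refine ⟨x 0, ?_⟩
  intro i hi j hkj hjl
  rcases Nat.eq_zero_or_pos i with rfl | hipos
  · rw [Metric.hausdorffDist_self_zero]; linarith
  · have hi1 : i - 1 + 1 = i := Nat.succ_pred_eq_of_pos hipos
    have hs : ℓ (i - 1) + n₀ ≤ k i := by
      have := hspace (i - 1) (by omega)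
      rwa [hi1] at this
    have hjn : n₀ ≤ j := by omega
    have := hclose (x 0) (x i) (j - n₀)
    rwa [Nat.add_sub_cancel' hjn] at this
end

section
/- Let (X,F) be a CR-dynamical system with p₁(F) = X (so all iterated images F^k(x) are nonempty). If there is a positive integer n₀ such that F^{n₀}(x) = F^{n₀}(y) for all x,y ∈ X, then (X,F) has the Hausdorff specification property (HSP). -/
/-- Let `(X, F)` be a CR-dynamical system with `p₁(F) = X`. If there is a
positive integer `n₀` such that `F^{n₀}(x) = F^{n₀}(y)` for all `x, y ∈ X`,
then `(X, F)` has the Hausdorff specification property (HSP). -/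
theorem crHSpec_of_iter_eq
    {X : Type*} [MetricSpace X] [CompactSpace X] [Nonempty X]
    (F : Set (X × X)) (hF : IsClosed F)
    (hp1 : Prod.fst '' F = Set.univ)
    (h : ∃ n₀ : ℕ, 0 < n₀ ∧ ∀ x y : X, relIter F n₀ x = relIter F n₀ y) :
    CRHSpec F := by
  obtain ⟨n₀, hn₀, hiter⟩ := h
  have key : ∀ (m : ℕ) (x y : X), relIter F (n₀ + m) x = relIter F (n₀ + m) y := by
    intro m
    induction m with
    | zero => simpa using hiter
    | succ m ih =>
      intro x y
      show {w | ∃ z ∈ relIter F (n₀ + m) x, (z, w) ∈ F}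
          = {w | ∃ z ∈ relIter F (n₀ + m) y, (z, w) ∈ F}
      rw [ih x y]
  intro ε hε
  refine ⟨n₀, hn₀, ?_⟩
  intro n x k ℓ hkl hspace
  refine ⟨x 0, ?_⟩
  intro i hi j hkj hjl
  rcases Nat.eq_zero_or_pos i with rfl | hi0
  · rw [Metric.hausdorffDist_self_zero]; exact le_of_lt hε
  · have h1 := hspace (i - 1) (by omega)
    rw [show i - 1 + 1 = i from by omega] at h1
    have hjn : n₀ ≤ j := by omega
    have heq : relIter F j (x 0) = relIter F j (x i) := by
      have := key (j - n₀) (x 0) (x i)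
      rwa [Nat.add_sub_cancel' hjn] at this
    rw [heq, Metric.hausdorffDist_self_zero]
    exact le_of_lt hε
end
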